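/- Let λ, σ > 0 be fixed and for (x, y, θ) ∈ ℝ³ let ψ_{x,y,θ} : ℝ² → ℂ be the Gabor filter ψ_{x,y,θ}(u,v) = exp(2πiX/λ)·exp(−(X²+Y²)/(2σ²)), where X = (u−x)cosθ + (v−y)sinθ and Y = −(u−x)sinθ + (v−y)cosθ. Then the squared L² distance between ψ_{x,y,θ} and ψ_{0,0,0} equals 2σ²π − 2K((x,y,θ),(0,0,0)), that is, ‖ψ_{x,y,θ} − ψ_{0,0,0}‖²_{L²} = 2σ²π·(1 − exp(−(x²+y²)/(4σ²) − 2σ²π²(1−cosθ)/λ²)·cos(π(x(1+cosθ) + y·sinθ)/λ)). -/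

import Mathlib

open MeasureTheory Complex

noncomputable def gaborX (x y θ u v : ℝ) : ℝ :=
  (u - x) * Real.cos θ + (v - y) * Real.sin θ

noncomputable def gaborY (x y θ u v : ℝ) : ℝ :=
  -(u - x) * Real.sin θ + (v - y) * Real.cos θ

noncomputable def gabor (l σ x y θ : ℝ) (w : ℝ × ℝ) : ℂ :=
  Complex.exp (2 * (Real.pi : ℂ) * Complex.I * (gaborX x y θ w.1 w.2 : ℂ) / (l : ℂ)) *
    Complex.exp
      (-(((gaborX x y θ w.1 w.2 : ℂ) ^ 2 + (gaborY x y θ w.1 w.2 : ℂ) ^ 2) /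
        (2 * (σ : ℂ) ^ 2)))

lemma gaborXY_sq (x y θ u v : ℝ) :
    gaborX x y θ u v ^ 2 + gaborY x y θ u v ^ 2 = (u - x) ^ 2 + (v - y) ^ 2 := by
  unfold gaborX gaborY
  linear_combination ((u - x) ^ 2 + (v - y) ^ 2) * Real.sin_sq_add_cos_sq θ

lemma gaborXY_sq' (x y θ u v : ℝ) :
    (gaborX x y θ u v : ℂ) ^ 2 + (gaborY x y θ u v : ℂ) ^ 2
      = ((u : ℂ) - x) ^ 2 + ((v : ℂ) - y) ^ 2 := by
  have := gaborXY_sq x y θ u v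
  push_cast [← this]
  norm_cast

lemma gabor_factor (l σ x y θ : ℝ) (w : ℝ × ℝ) :
    gabor l σ x y θ w =
      Complex.exp (-(1 / (2 * (σ : ℂ) ^ 2)) * w.1 ^ 2
          + ((x : ℂ) / σ ^ 2 + 2 * (Real.pi : ℂ) * I * (Real.cos θ : ℂ) / l) * w.1
          + (-(x : ℂ) ^ 2 / (2 * (σ : ℂ) ^ 2) - 2 * (Real.pi : ℂ) * I * (Real.cos θ : ℂ) * x / l)) *
      Complex.exp (-(1 / (2 * (σ : ℂ) ^ 2)) * w.2 ^ 2
          + ((y : ℂ) / σ ^ 2 + 2 * (Real.pi : ℂ) * I * (Real.sin θ : ℂ) / l) * w.2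
          + (-(y : ℂ) ^ 2 / (2 * (σ : ℂ) ^ 2) - 2 * (Real.pi : ℂ) * I * (Real.sin θ : ℂ) * y / l)) := by
  rw [gabor, ← Complex.exp_add, ← Complex.exp_add]
  congr 1
  rw [gaborXY_sq']
  have hX : (gaborX x y θ w.1 w.2 : ℂ)
      = ((w.1 : ℂ) - x) * (Real.cos θ : ℂ) + ((w.2 : ℂ) - y) * (Real.sin θ : ℂ) := by
    push_cast [gaborX]; ring
  rw [hX]
  push_cast
  ring

lemma gabor_mul_conj (l σ x y θ : ℝ) (w : ℝ × ℝ) :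
    gabor l σ x y θ w * (starRingEnd ℂ) (gabor l σ 0 0 0 w) =
      Complex.exp (-(1 / (σ : ℂ) ^ 2) * w.1 ^ 2
          + ((x : ℂ) / σ ^ 2 + 2 * (Real.pi : ℂ) * I * ((Real.cos θ : ℂ) - 1) / l) * w.1
          + (-(x : ℂ) ^ 2 / (2 * (σ : ℂ) ^ 2) - 2 * (Real.pi : ℂ) * I * (Real.cos θ : ℂ) * x / l)) *
      Complex.exp (-(1 / (σ : ℂ) ^ 2) * w.2 ^ 2
          + ((y : ℂ) / σ ^ 2 + 2 * (Real.pi : ℂ) * I * (Real.sin θ : ℂ) / l) * w.2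
          + (-(y : ℂ) ^ 2 / (2 * (σ : ℂ) ^ 2) - 2 * (Real.pi : ℂ) * I * (Real.sin θ : ℂ) * y / l)) := by
  rw [gabor_factor l σ x y θ w, gabor_factor l σ 0 0 0 w]
  simp only [Real.cos_zero, Real.sin_zero, ofReal_zero, ofReal_one]
  rw [map_mul, ← Complex.exp_conj, ← Complex.exp_conj,
    ← Complex.exp_add, ← Complex.exp_add, ← Complex.exp_add, ← Complex.exp_add]
  congr 1
  simp only [map_add, map_mul, map_div₀, map_neg, map_pow, map_sub, map_one, map_zero,
    Complex.conj_ofReal, Complex.conj_I, map_ofNat]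
  push_cast
  ring

lemma integral_gabor_mul_conj {l σ : ℝ} (hl : 0 < l) (hσ : 0 < σ) (x y θ : ℝ) :
    (∫ w : ℝ × ℝ, gabor l σ x y θ w * (starRingEnd ℂ) (gabor l σ 0 0 0 w)) =
      ((σ ^ 2 * Real.pi : ℝ) : ℂ) *
        Complex.exp (((-((x ^ 2 + y ^ 2) / (4 * σ ^ 2))
              - 2 * σ ^ 2 * Real.pi ^ 2 * (1 - Real.cos θ) / l ^ 2 : ℝ) : ℂ)
          + ((-(Real.pi * (x * (1 + Real.cos θ) + y * Real.sin θ) / l) : ℝ) : ℂ) * I) := by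
  have hb : (-(1 / (σ : ℂ) ^ 2)).re < 0 := by
    have : (-(1 / (σ : ℂ) ^ 2)) = ((-(1 / σ ^ 2) : ℝ) : ℂ) := by push_cast; ring
    rw [this, Complex.ofReal_re]
    have : (0:ℝ) < 1 / σ ^ 2 := by positivity
    linarith
  simp_rw [gabor_mul_conj]
  rw [Measure.volume_eq_prod,
    integral_prod_mul
      (fun u : ℝ => Complex.exp (-(1 / (σ : ℂ) ^ 2) * (u : ℂ) ^ 2
        + ((x : ℂ) / σ ^ 2 + 2 * (Real.pi : ℂ) * I * ((Real.cos θ : ℂ) - 1) / l) * u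
        + (-(x : ℂ) ^ 2 / (2 * (σ : ℂ) ^ 2) - 2 * (Real.pi : ℂ) * I * (Real.cos θ : ℂ) * x / l)))
      (fun v : ℝ => Complex.exp (-(1 / (σ : ℂ) ^ 2) * (v : ℂ) ^ 2
        + ((y : ℂ) / σ ^ 2 + 2 * (Real.pi : ℂ) * I * (Real.sin θ : ℂ) / l) * v
        + (-(y : ℂ) ^ 2 / (2 * (σ : ℂ) ^ 2) - 2 * (Real.pi : ℂ) * I * (Real.sin θ : ℂ) * y / l))),
    integral_cexp_quadratic hb, integral_cexp_quadratic hb]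
  rw [mul_mul_mul_comm, ← Complex.exp_add]
  have hpos : (0 : ℝ) ≤ Real.pi * σ ^ 2 := by positivity
  have hA : ((Real.pi : ℂ) / -(-(1 / (σ : ℂ) ^ 2))) = ((Real.pi * σ ^ 2 : ℝ) : ℂ) := by
    push_cast
    field_simp
  rw [hA]
  have h2 : ((Real.pi * σ ^ 2 : ℝ) : ℂ) ^ (1 / 2 : ℂ)
      = ((Real.sqrt (Real.pi * σ ^ 2) : ℝ) : ℂ) := by
    rw [show (1 / 2 : ℂ) = ((1 / 2 : ℝ) : ℂ) by norm_num, ← Complex.ofReal_cpow hpos,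
      ← Real.rpow_natCast, ← Real.sqrt_eq_rpow]
  rw [h2, ← Complex.ofReal_mul, Real.mul_self_sqrt hpos,
    show Real.pi * σ ^ 2 = σ ^ 2 * Real.pi from mul_comm _ _]
  have hσc : (σ : ℂ) ≠ 0 := Complex.ofReal_ne_zero.mpr hσ.ne'
  have hd : ∀ z : ℂ, z / (4 * -(1 / (σ : ℂ) ^ 2)) = -(z * σ ^ 2) / 4 := by
    intro z; field_simp
  rw [hd, hd]
  congr 2
  have hsc : (Complex.sin (θ:ℂ)) ^ 2 + (Complex.cos (θ:ℂ)) ^ 2 = 1 := Complex.sin_sq_add_cos_sq _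
  have hlc : (l : ℂ) ≠ 0 := Complex.ofReal_ne_zero.mpr hl.ne'
  apply mul_left_cancel₀ (show (4 * (σ:ℂ) ^ 2 * (l:ℂ) ^ 2) ≠ 0 by
    exact mul_ne_zero (mul_ne_zero (by norm_num) (pow_ne_zero _ hσc)) (pow_ne_zero _ hlc))
  push_cast
  field_simp
  ring_nf
  simp only [Complex.I_sq, Complex.sin_sq]
  ring_nf

lemma gabor_normSq (l σ x y θ : ℝ) (w : ℝ × ℝ) :
    ‖gabor l σ x y θ w‖ ^ 2
      = Real.exp (-(w.1 - x) ^ 2 / σ ^ 2) * Real.exp (-(w.2 - y) ^ 2 / σ ^ 2) := by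
  rw [gabor_factor, norm_mul]
  have key : ∀ c K q : ℝ, ‖Complex.exp (-(1 / (2 * (σ : ℂ) ^ 2)) * (q : ℂ) ^ 2
        + ((c : ℂ) / σ ^ 2 + 2 * (Real.pi : ℂ) * I * (K : ℂ) / l) * q
        + (-(c : ℂ) ^ 2 / (2 * (σ : ℂ) ^ 2) - 2 * (Real.pi : ℂ) * I * (K : ℂ) * c / l))‖
      = Real.exp (-(q - c) ^ 2 / (2 * σ ^ 2)) := by
    intro c K q
    rw [Complex.norm_exp]
    congr 1
    rw [show (-(1 / (2 * (σ : ℂ) ^ 2)) * (q : ℂ) ^ 2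
        + ((c : ℂ) / σ ^ 2 + 2 * (Real.pi : ℂ) * I * (K : ℂ) / l) * q
        + (-(c : ℂ) ^ 2 / (2 * (σ : ℂ) ^ 2) - 2 * (Real.pi : ℂ) * I * (K : ℂ) * c / l))
        = ((-(q - c) ^ 2 / (2 * σ ^ 2) : ℝ) : ℂ)
          + ((2 * Real.pi * K * (q - c) / l : ℝ) : ℂ) * I by push_cast; ring]
    simp only [Complex.add_re, Complex.ofReal_re, Complex.re_ofReal_mul, Complex.I_re,
      mul_zero, add_zero]
  have pw : ∀ a : ℝ, Real.exp a ^ 2 = Real.exp (2 * a) := by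
    intro a; rw [sq, ← Real.exp_add, two_mul]
  rw [key x (Real.cos θ) w.1, key y (Real.sin θ) w.2, mul_pow, pw, pw]
  congr 1 <;> ring

lemma integral_gabor_normSq {σ : ℝ} (hσ : 0 < σ) (l x y θ : ℝ) :
    (∫ w : ℝ × ℝ, ‖gabor l σ x y θ w‖ ^ 2) = σ ^ 2 * Real.pi := by
  have h1 : ∀ c : ℝ, (fun u : ℝ => Real.exp (-(u - c) ^ 2 / σ ^ 2))
      = fun u : ℝ => Real.exp (-(1 / σ ^ 2) * (u - c) ^ 2) := by
    intro c; funext u; congr 1; ring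
  have hb : (0:ℝ) < 1 / σ ^ 2 := by positivity
  simp_rw [gabor_normSq]
  rw [Measure.volume_eq_prod,
    integral_prod_mul (fun u : ℝ => Real.exp (-(u - x) ^ 2 / σ ^ 2))
      (fun v : ℝ => Real.exp (-(v - y) ^ 2 / σ ^ 2)), h1 x, h1 y]
  rw [show (fun u : ℝ => Real.exp (-(1 / σ ^ 2) * (u - x) ^ 2))
      = fun u : ℝ => (fun t : ℝ => Real.exp (-(1 / σ ^ 2) * t ^ 2)) (u - x) from rfl,
    show (fun v : ℝ => Real.exp (-(1 / σ ^ 2) * (v - y) ^ 2))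
      = fun v : ℝ => (fun t : ℝ => Real.exp (-(1 / σ ^ 2) * t ^ 2)) (v - y) from rfl,
    integral_sub_right_eq_self (fun t : ℝ => Real.exp (-(1 / σ ^ 2) * t ^ 2)) x,
    integral_sub_right_eq_self (fun t : ℝ => Real.exp (-(1 / σ ^ 2) * t ^ 2)) y,
    integral_gaussian]
  rw [Real.mul_self_sqrt (by positivity)]
  field_simp

lemma integrable_gabor_normSq {σ : ℝ} (hσ : 0 < σ) (l x y θ : ℝ) :
    Integrable (fun w : ℝ × ℝ => ‖gabor l σ x y θ w‖ ^ 2) := by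
  have hb : (0:ℝ) < 1 / σ ^ 2 := by positivity
  have h1 : ∀ c : ℝ, Integrable (fun u : ℝ => Real.exp (-(u - c) ^ 2 / σ ^ 2)) := by
    intro c
    have := (integrable_exp_neg_mul_sq hb).comp_sub_right c
    refine this.congr ?_
    filter_upwards with u
    congr 1; ring
  simp_rw [gabor_normSq]
  rw [Measure.volume_eq_prod]
  exact (h1 x).mul_prod (h1 y)

lemma integrable_gabor_mul_conj {l σ : ℝ} (hσ : 0 < σ) (x y θ : ℝ) :
    Integrable (fun w : ℝ × ℝ => gabor l σ x y θ w * (starRingEnd ℂ) (gabor l σ 0 0 0 w)) := by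
  have hb : (-(1 / (σ : ℂ) ^ 2)).re < 0 := by
    have : (-(1 / (σ : ℂ) ^ 2)) = ((-(1 / σ ^ 2) : ℝ) : ℂ) := by push_cast; ring
    rw [this, Complex.ofReal_re]
    have : (0:ℝ) < 1 / σ ^ 2 := by positivity
    linarith
  simp_rw [gabor_mul_conj]
  rw [Measure.volume_eq_prod]
  exact (integrable_cexp_quadratic' hb _ _).mul_prod (integrable_cexp_quadratic' hb _ _)

/-- The squared `L²` distance between `ψ_{x,y,θ}` and `ψ_{0,0,0}` equals
`2σ²π − 2K((x,y,θ),(0,0,0))`, that is,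
`2σ²π(1 − exp(−(x²+y²)/(4σ²) − 2σ²π²(1−cosθ)/λ²)·cos(π(x(1+cosθ)+y sinθ)/λ))`. -/
theorem gabor_L2_distance (l σ : ℝ) (hl : 0 < l) (hσ : 0 < σ) (x y θ : ℝ) :
    (∫ w : ℝ × ℝ, ‖gabor l σ x y θ w - gabor l σ 0 0 0 w‖ ^ 2) =
        2 * σ ^ 2 * Real.pi -
          2 * (∫ w : ℝ × ℝ, gabor l σ x y θ w * (starRingEnd ℂ) (gabor l σ 0 0 0 w)).re ∧
      (∫ w : ℝ × ℝ, ‖gabor l σ x y θ w - gabor l σ 0 0 0 w‖ ^ 2) =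
        2 * σ ^ 2 * Real.pi *
          (1 - Real.exp (-((x ^ 2 + y ^ 2) / (4 * σ ^ 2))
                - 2 * σ ^ 2 * Real.pi ^ 2 * (1 - Real.cos θ) / l ^ 2) *
            Real.cos (Real.pi * (x * (1 + Real.cos θ) + y * Real.sin θ) / l)) := by
  have hpt : ∀ a b : ℂ, ‖a - b‖ ^ 2 = ‖a‖ ^ 2 + ‖b‖ ^ 2 - 2 * (a * (starRingEnd ℂ) b).re := by
    intro a b
    simp only [Complex.sq_norm, Complex.normSq_apply, Complex.sub_re,
      Complex.sub_im, Complex.mul_re, Complex.conj_re, Complex.conj_im]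
    ring
  have h1 := integrable_gabor_normSq hσ l x y θ
  have h2 := integrable_gabor_normSq hσ l 0 0 0
  have h3 := integrable_gabor_mul_conj (l := l) hσ x y θ
  have e1 : (∫ w : ℝ × ℝ, ‖gabor l σ x y θ w - gabor l σ 0 0 0 w‖ ^ 2) =
      2 * σ ^ 2 * Real.pi -
        2 * (∫ w : ℝ × ℝ, gabor l σ x y θ w * (starRingEnd ℂ) (gabor l σ 0 0 0 w)).re := by
    simp_rw [hpt]
    have hadd : Integrable (fun w : ℝ × ℝ =>
        ‖gabor l σ x y θ w‖ ^ 2 + ‖gabor l σ 0 0 0 w‖ ^ 2) := h1.add h2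
    have hmul : Integrable (fun w : ℝ × ℝ =>
        2 * (gabor l σ x y θ w * (starRingEnd ℂ) (gabor l σ 0 0 0 w)).re) := by
      exact h3.re.const_mul 2
    rw [integral_sub hadd hmul, integral_add h1 h2,
      integral_gabor_normSq hσ, integral_gabor_normSq hσ, MeasureTheory.integral_const_mul]
    rw [show ∫ w : ℝ × ℝ, (gabor l σ x y θ w * (starRingEnd ℂ) (gabor l σ 0 0 0 w)).re
        = (∫ w : ℝ × ℝ, gabor l σ x y θ w * (starRingEnd ℂ) (gabor l σ 0 0 0 w)).re by
      rw [← RCLike.re_eq_complex_re, integral_re h3, RCLike.re_eq_complex_re]]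
    ring
  refine ⟨e1, ?_⟩
  rw [e1, integral_gabor_mul_conj hl hσ]
  rw [Complex.re_ofReal_mul, Complex.exp_re]
  simp only [Complex.add_re, Complex.ofReal_re, Complex.re_ofReal_mul, Complex.I_re, mul_zero,
    add_zero, Complex.add_im, Complex.ofReal_im, Complex.im_ofReal_mul, Complex.I_im, mul_one,
    zero_add]
  rw [Real.cos_neg]
  ring
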